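/- Let a, b ∈ (0,1] satisfy a/(a+1) < b ≤ 4a/(4-a²) and b/(b+1) < a < 4b/(4-b²). Then the point x₂ = (ab + 2b - √(ab(ab+4)))/(2ab) is a 2-periodic point of f = f_{a,b}: f(x₂) ≠ x₂ and f(f(x₂)) = x₂. -/

import Mathlib

noncomputable def fab (a b x : ℝ) : ℝ :=
  if x ≤ 1/2 then x * (1 + a - a * x) else x * (1 - b + b * x)

/-! With `s = √(ab(ab+4))`, the points `x₂ = (ab + 2b - s)/(2ab)` and `y₂ = (ab - 2a + s)/(2ab)`
are exchanged by the two quadratic branches of `f`: `x(1+a-ax) = y₂` at `x = x₂` and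
`y(1-b+by) = x₂` at `y = y₂`, both being polynomial identities modulo `s² = ab(ab+4)`.
The bound `b ≤ 4a/(4-a²)` is equivalent to `2b ≤ s`, i.e. `x₂ ≤ 1/2`, and `a < 4b/(4-b²)` to
`2a < s`, i.e. `y₂ > 1/2`; so each branch is applied on its own half, and `x₂ < y₂`. -/

theorem fab_of_le_half {a b x : ℝ} (hx : x ≤ 1/2) : fab a b x = x * (1 + a - a * x) :=
  if_pos hx

theorem fab_of_half_lt {a b x : ℝ} (hx : 1/2 < x) : fab a b x = x * (1 - b + b * x) :=
  if_neg hx.not_ge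

noncomputable def twoCycleLo (a b s : ℝ) : ℝ := (a * b + 2 * b - s) / (2 * a * b)

noncomputable def twoCycleHi (a b s : ℝ) : ℝ := (a * b - 2 * a + s) / (2 * a * b)

section TwoCycle

variable {a b s : ℝ}

theorem twoCycleLo_le_half_iff (hab : 0 < a * b) : twoCycleLo a b s ≤ 1/2 ↔ 2 * b ≤ s := by
  rw [twoCycleLo, div_le_iff₀ (by linarith)]
  constructor <;> intro h <;> linarith

theorem half_lt_twoCycleHi_iff (hab : 0 < a * b) : 1/2 < twoCycleHi a b s ↔ 2 * a < s := by
  rw [twoCycleHi, lt_div_iff₀ (by linarith)]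
  constructor <;> intro h <;> linarith

variable (ha : a ≠ 0) (hb : b ≠ 0) (hs : s ^ 2 = a * b * (a * b + 4))
include ha hb hs

theorem twoCycleLo_mul_left_branch :
    twoCycleLo a b s * (1 + a - a * twoCycleLo a b s) = twoCycleHi a b s := by
  rw [twoCycleLo, twoCycleHi]
  field_simp
  linear_combination -hs

theorem twoCycleHi_mul_right_branch :
    twoCycleHi a b s * (1 - b + b * twoCycleHi a b s) = twoCycleLo a b s := by
  rw [twoCycleLo, twoCycleHi]
  field_simp
  linear_combination hs

end TwoCycle

theorem two_mul_le_sqrt_of_le_div {a b : ℝ} (ha : 0 < a) (ha2 : a < 2) (hb : 0 < b)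
    (h : b ≤ 4 * a / (4 - a ^ 2)) : 2 * b ≤ √(a * b * (a * b + 4)) := by
  rw [le_div_iff₀ (by nlinarith)] at h
  rw [Real.le_sqrt' (by positivity)]
  nlinarith [mul_le_mul_of_nonneg_left h hb.le]

theorem two_mul_lt_sqrt_of_lt_div {a b : ℝ} (ha : 0 < a) (hb : 0 < b) (hb2 : b < 2)
    (h : a < 4 * b / (4 - b ^ 2)) : 2 * a < √(a * b * (a * b + 4)) := by
  rw [lt_div_iff₀ (by nlinarith)] at h
  rw [Real.lt_sqrt (by positivity)]
  nlinarith [mul_lt_mul_of_pos_left h ha]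

theorem stmt13_general (a b : ℝ) (ha : a ∈ Set.Ioc (0:ℝ) 1) (hb : b ∈ Set.Ioc (0:ℝ) 1)
    (h2 : b ≤ 4 * a / (4 - a^2))
    (h4 : a < 4 * b / (4 - b^2)) :
    fab a b ((a * b + 2 * b - Real.sqrt (a * b * (a * b + 4))) / (2 * a * b)) ≠
      (a * b + 2 * b - Real.sqrt (a * b * (a * b + 4))) / (2 * a * b) ∧
    fab a b (fab a b ((a * b + 2 * b - Real.sqrt (a * b * (a * b + 4))) / (2 * a * b))) =
      (a * b + 2 * b - Real.sqrt (a * b * (a * b + 4))) / (2 * a * b) := by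
  obtain ⟨ha0, ha1⟩ := ha
  obtain ⟨hb0, hb1⟩ := hb
  set s := √(a * b * (a * b + 4))
  have hs : s ^ 2 = a * b * (a * b + 4) := Real.sq_sqrt (by positivity)
  have hab : 0 < a * b := mul_pos ha0 hb0
  have hlo : twoCycleLo a b s ≤ 1/2 :=
    (twoCycleLo_le_half_iff hab).2 (two_mul_le_sqrt_of_le_div ha0 (by linarith) hb0 h2)
  have hhi : 1/2 < twoCycleHi a b s :=
    (half_lt_twoCycleHi_iff hab).2 (two_mul_lt_sqrt_of_lt_div ha0 hb0 (by linarith) h4)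
  have hfx : fab a b (twoCycleLo a b s) = twoCycleHi a b s := by
    rw [fab_of_le_half hlo, twoCycleLo_mul_left_branch ha0.ne' hb0.ne' hs]
  have hfy : fab a b (twoCycleHi a b s) = twoCycleLo a b s := by
    rw [fab_of_half_lt hhi, twoCycleHi_mul_right_branch ha0.ne' hb0.ne' hs]
  change fab a b (twoCycleLo a b s) ≠ twoCycleLo a b s ∧
    fab a b (fab a b (twoCycleLo a b s)) = twoCycleLo a b s
  rw [hfx, hfy]
  exact ⟨(hlo.trans_lt hhi).ne', rfl⟩

theorem stmt13 (a b : ℝ) (ha : a ∈ Set.Ioc (0:ℝ) 1) (hb : b ∈ Set.Ioc (0:ℝ) 1)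
    (h1 : a / (a + 1) < b) (h2 : b ≤ 4 * a / (4 - a^2))
    (h3 : b / (b + 1) < a) (h4 : a < 4 * b / (4 - b^2)) :
    fab a b ((a * b + 2 * b - Real.sqrt (a * b * (a * b + 4))) / (2 * a * b)) ≠
      (a * b + 2 * b - Real.sqrt (a * b * (a * b + 4))) / (2 * a * b) ∧
    fab a b (fab a b ((a * b + 2 * b - Real.sqrt (a * b * (a * b + 4))) / (2 * a * b))) =
      (a * b + 2 * b - Real.sqrt (a * b * (a * b + 4))) / (2 * a * b) :=
  stmt13_general a b ha hb h2 h4
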